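/- Let H be an n-vertex C₄-free graph and let X ⊆ V(H) be a set in which every vertex has degree (in H) greater than (1−b)·√n, where 0 < b < 1/4. Then for every Z ⊆ X with |Z| = C·√n (where C = C(n) → ∞), the proper square H² satisfies e(H²[Z]) > C²·n/8, provided n is sufficiently large. -/

import Mathlib

/-- `G` is `C₄`-free: no two distinct vertices have two or more common neighbors. -/
def C4Free {V : Type*} (G : SimpleGraph V) : Prop :=
  ∀ x y z w : V, x ≠ y → G.Adj x z → G.Adj y z → G.Adj x w → G.Adj y w → z = w

/-- The proper square of `G`: `x ~ y` iff `x ≠ y` and they have a common neighbor. -/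
def properSquare {V : Type*} (G : SimpleGraph V) : SimpleGraph V where
  Adj x y := x ≠ y ∧ ∃ z, G.Adj x z ∧ G.Adj z y
  symm := by
    constructor
    rintro x y ⟨hxy, z, h1, h2⟩
    exact ⟨hxy.symm, z, h2.symm, h1.symm⟩
  loopless := by constructor; rintro x ⟨h, -⟩; exact h rfl

/-- The degree of vertex `v` in `G`. -/
noncomputable def deg {V : Type*} (G : SimpleGraph V) (v : V) : ℕ :=
  Nat.card {w : V | G.Adj v w}

/-! Double count cherries `x – v – y` with both ends in `Z`. Writing `d v = |N(v) ∩ Z|`,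
their number is `∑ d v (d v - 1)`; since `H` is `C₄`-free each pair `x ≠ y` is the pair of
ends of at most one cherry, so this is at most `2 e(H²[Z])`. With `D = ∑ d v = ∑_{z ∈ Z} deg z
> (3/4) C n` and Cauchy–Schwarz `∑ d v ² ≥ D² / n`, we get `2 e(H²[Z]) ≥ D²/n - D`, which
exceeds `C² n / 4` as soon as `C ≥ 4`. -/

open Finset SimpleGraph

theorem deg_eq_degree {V : Type*} [Fintype V] (G : SimpleGraph V) [DecidableRel G.Adj] (v : V) :
    deg G v = G.degree v := by
  rw [deg, Nat.card_eq_fintype_card, ← card_neighborSet_eq_degree]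
  rfl

theorem SimpleGraph.card_filter_adj_le_two_mul_card_edgeSet_induce {V : Type*}
    (G : SimpleGraph V) [DecidableRel G.Adj] (Z : Finset V) :
    #((Z ×ˢ Z).filter fun p => G.Adj p.1 p.2) ≤ 2 * Nat.card (G.induce (Z : Set V)).edgeSet := by
  classical
  rw [Nat.card_eq_fintype_card, ← edgeFinset_card, two_mul_card_edgeFinset]
  refine card_le_card_of_surjOn (fun q : ↥(Z : Set V) × ↥(Z : Set V) => ((q.1 : V), (q.2 : V))) ?_
  rintro ⟨x, y⟩ hxy
  simp only [coe_filter, mem_product, Set.mem_ofPred_eq] at hxy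
  obtain ⟨⟨hx, hy⟩, hadj⟩ := hxy
  exact ⟨(⟨x, hx⟩, ⟨y, hy⟩), by simpa using hadj, rfl⟩

variable {V : Type*} [Fintype V] [DecidableEq V]

theorem SimpleGraph.sum_card_neighborFinset_inter (G : SimpleGraph V) [DecidableRel G.Adj]
    (Z : Finset V) : ∑ v, #(G.neighborFinset v ∩ Z) = ∑ z ∈ Z, G.degree z := by
  convert sum_card_bipartiteAbove_eq_sum_card_bipartiteBelow (s := univ) (t := Z) (r := G.Adj)
    using 2 with v _ z _
  · congr 1; ext; simp [bipartiteAbove, and_comm]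
  · rw [← card_neighborFinset_eq_degree]; congr 1; ext; simp [bipartiteBelow, adj_comm]

namespace C4Free

variable {G : SimpleGraph V} [DecidableRel G.Adj]

theorem sum_card_offDiag_le (hG : C4Free G) (Z : Finset V) :
    ∑ v, #(G.neighborFinset v ∩ Z).offDiag ≤
      2 * Nat.card ((properSquare G).induce (Z : Set V)).edgeSet := by
  classical
  have hdisj : ((univ : Finset V) : Set V).PairwiseDisjoint
      fun v => (G.neighborFinset v ∩ Z).offDiag := by
    intro v _ w _ hvw
    refine Finset.disjoint_left.mpr fun p hv hw => hvw ?_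
    simp only [mem_offDiag, mem_inter, mem_neighborFinset] at hv hw
    exact hG _ _ _ _ hv.2.2 hv.1.1.symm hv.2.1.1.symm hw.1.1.symm hw.2.1.1.symm
  have hsub : univ.biUnion (fun v => (G.neighborFinset v ∩ Z).offDiag) ⊆
      (Z ×ˢ Z).filter fun p => (properSquare G).Adj p.1 p.2 := by
    intro p hp
    simp only [mem_biUnion, mem_offDiag, mem_inter, mem_neighborFinset] at hp
    obtain ⟨v, -, ⟨hv1, h1⟩, ⟨hv2, h2⟩, hne⟩ := hp
    exact mem_filter.mpr ⟨mem_product.mpr ⟨h1, h2⟩, hne, v, hv1.symm, hv2⟩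
  calc ∑ v, #(G.neighborFinset v ∩ Z).offDiag
      = #(univ.biUnion fun v => (G.neighborFinset v ∩ Z).offDiag) := (card_biUnion hdisj).symm
    _ ≤ _ := card_le_card hsub
    _ ≤ _ := (properSquare G).card_filter_adj_le_two_mul_card_edgeSet_induce Z

theorem sq_sum_degree_sub_le (hG : C4Free G) (Z : Finset V) :
    ((∑ z ∈ Z, G.degree z : ℕ) : ℝ) ^ 2 - Fintype.card V * ∑ z ∈ Z, G.degree z ≤
      2 * Fintype.card V * Nat.card ((properSquare G).induce (Z : Set V)).edgeSet := by
  set d : V → ℕ := fun v => #(G.neighborFinset v ∩ Z)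
  set e := Nat.card ((properSquare G).induce (Z : Set V)).edgeSet
  have hcherry : ∑ v, ((d v : ℝ) ^ 2 - d v) ≤ 2 * e := by
    have hle : ∀ v, d v ≤ d v * d v := fun v => Nat.le_mul_self _
    have := hG.sum_card_offDiag_le Z
    simp only [offDiag_card] at this
    calc ∑ v, ((d v : ℝ) ^ 2 - d v) = ((∑ v, (d v * d v - d v) : ℕ) : ℝ) := by
          push_cast [Nat.cast_sub (hle _)]; simp only [sq]
      _ ≤ 2 * e := by exact_mod_cast this
  have hCS := sq_sum_le_card_mul_sum_sq (s := univ) (f := fun v => (d v : ℝ))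
  rw [card_univ] at hCS
  rw [sum_sub_distrib] at hcherry
  rw [← sum_card_neighborFinset_inter]
  push_cast
  nlinarith [mul_le_mul_of_nonneg_left hcherry (Nat.cast_nonneg (Fintype.card V) : (0 : ℝ) ≤ _)]

end C4Free

theorem sq_mul_div_eight_lt_of_sq_sub_le {n C D e : ℝ} (hn : 0 < n) (hC : 4 ≤ C)
    (hD : 3 / 4 * C * n ≤ D) (h : D ^ 2 - n * D ≤ 2 * n * e) : C ^ 2 * n / 8 < e := by
  have hDn : 3 / 4 * C * n * (3 / 4 * C * n - n) ≤ D ^ 2 - n * D := by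
    nlinarith [mul_nonneg (sub_nonneg.mpr hD) (by nlinarith : 0 ≤ D + 3 / 4 * C * n - n)]
  have hquad : C ^ 2 * n ^ 2 / 4 < 3 / 4 * C * n * (3 / 4 * C * n - n) := by
    nlinarith [mul_pos (pow_pos hn 2) (by nlinarith : 0 < C * (5 / 16 * C - 3 / 4))]
  nlinarith

theorem square_dense_on_large_sets_general (b : ℝ) (hb : b < 1 / 4)
    (C : ℕ → ℝ) (hC : Filter.Tendsto C Filter.atTop Filter.atTop) :
    ∃ n₀ : ℕ, ∀ n ≥ n₀, ∀ H : SimpleGraph (Fin n), C4Free H →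
      ∀ X Z : Finset (Fin n), Z ⊆ X →
        (∀ v ∈ X, (deg H v : ℝ) > (1 - b) * Real.sqrt n) →
        (Z.card : ℝ) = C n * Real.sqrt n →
        (Nat.card ((properSquare H).induce (Z : Set (Fin n))).edgeSet : ℝ) >
          (C n) ^ 2 * n / 8 := by
  classical
  obtain ⟨N, hN⟩ := (hC.eventually_ge_atTop 4).exists_forall_of_atTop
  refine ⟨max N 1, fun n hn H hH X Z hZX hX hZ => ?_⟩
  have hn0 : (0 : ℝ) < n := by exact_mod_cast (le_of_max_le_right hn)
  have hdeg : 3 / 4 * C n * n ≤ ∑ z ∈ Z, (H.degree z : ℝ) := calc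
    3 / 4 * C n * n = ∑ _z ∈ Z, 3 / 4 * √n := by
      rw [sum_const, nsmul_eq_mul, hZ]
      linear_combination -(3 / 4 * C n) * Real.sq_sqrt hn0.le
    _ ≤ ∑ z ∈ Z, (H.degree z : ℝ) := sum_le_sum fun z hz => by
      have := hX z (hZX hz)
      rw [deg_eq_degree] at this
      nlinarith [Real.sqrt_nonneg n]
  have hcount := hH.sq_sum_degree_sub_le Z
  rw [Fintype.card_fin] at hcount
  push_cast at hcount
  exact sq_mul_div_eight_lt_of_sq_sub_le hn0 (hN n (le_of_max_le_left hn)) hdeg hcount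

theorem square_dense_on_large_sets (b : ℝ) (hb0 : 0 < b) (hb : b < 1 / 4)
    (C : ℕ → ℝ) (hC : Filter.Tendsto C Filter.atTop Filter.atTop) :
    ∃ n₀ : ℕ, ∀ n ≥ n₀, ∀ H : SimpleGraph (Fin n), C4Free H →
      ∀ X Z : Finset (Fin n), Z ⊆ X →
        (∀ v ∈ X, (deg H v : ℝ) > (1 - b) * Real.sqrt n) →
        (Z.card : ℝ) = C n * Real.sqrt n →
        (Nat.card ((properSquare H).induce (Z : Set (Fin n))).edgeSet : ℝ) >
          (C n) ^ 2 * n / 8 :=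
  square_dense_on_large_sets_general b hb C hC
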